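/- Let C ⊆ G_q(k,n) be a code with d_I(X,Y) ≥ d for all distinct X, Y ∈ C. Let Q be an (n−1)-dimensional subspace of F_q^n and let τ be the unique coordinate at which the identifying vector v(Q) is zero (so that the τ-th standard unit vector e_τ does not lie in Q). Let w ∈ F_q^n with w ∉ Q, and suppose there exist X₁, X₂ ∈ C with X₁ ⊆ Q and w ∈ X₂. Then the punctured code C'_{Q,w} = { Γ_τ(X) : X ∈ C, X ⊆ Q } ∪ { Γ_τ(X ∩ Q) : X ∈ C, w ∈ X } is a set of subspaces of F_q^{n−1} (of dimensions k and k−1) in which any two distinct elements have injection distance at least d. -/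

import Mathlib

open Module

/-- The injection distance `d_I(X,Y) = max{dim X, dim Y} - dim (X ∩ Y)`. -/
noncomputable def dI {F V : Type*} [Field F] [AddCommGroup V] [Module F V]
    (X Y : Submodule F V) : ℕ :=
  max (finrank F X) (finrank F Y) - finrank F ↥(X ⊓ Y)

/-- The dimension of the projection of `X` onto the first `j` coordinates. -/
noncomputable def projDim {F : Type*} [Field F] {n : ℕ}
    (X : Submodule F (Fin n → F)) (j : ℕ) (hj : j ≤ n) : ℕ :=
  finrank F (X.map (LinearMap.funLeft F F (Fin.castLE hj)))

/-- The set of pivot positions of `X` (the support of the identifying vector `v(X)`). -/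
noncomputable def pivots {F : Type*} [Field F] {n : ℕ}
    (X : Submodule F (Fin n → F)) : Finset (Fin n) :=
  Finset.univ.filter fun j : Fin n =>
    projDim X j.val j.isLt.le < projDim X (j.val + 1) j.isLt

/-- **Puncturing preserves the injection distance.**  Let `C` be a code of `k`-dimensional
subspaces of `F_q^{n+1}` with minimum injection distance `d`.  Let `Q` be an
`n`-dimensional subspace of `F_q^{n+1}`, `τ` the unique coordinate at which the
identifying vector `v(Q)` is zero, and `w ∉ Q`; suppose some codeword is contained in `Q`
and some codeword contains `w`.  Then the punctured code
`C'_{Q,w} = {Γ_τ(X) : X ∈ C, X ⊆ Q} ∪ {Γ_τ(X ∩ Q) : X ∈ C, w ∈ X}`, where `Γ_τ` deletes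
the `τ`-th coordinate, is a set of subspaces of `F_q^n` of dimensions `k` and `k-1` in
which any two distinct elements have injection distance at least `d`. -/
theorem statement19 (q n k d : ℕ) (hq : IsPrimePow q)
    (F : Type*) [Field F] [Fintype F] (hF : Fintype.card F = q)
    (C : Set (Submodule F (Fin (n + 1) → F)))
    (hCk : ∀ X ∈ C, finrank F X = k)
    (hCd : ∀ X ∈ C, ∀ Y ∈ C, X ≠ Y → d ≤ dI X Y)
    (Q : Submodule F (Fin (n + 1) → F)) (hQ : finrank F Q = n)
    (τ : Fin (n + 1)) (hτ : τ ∉ pivots Q) (hτuniq : ∀ j : Fin (n + 1), j ≠ τ → j ∈ pivots Q)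
    (w : Fin (n + 1) → F) (hw : w ∉ Q)
    (X₁ : Submodule F (Fin (n + 1) → F)) (hX₁ : X₁ ∈ C) (hX₁Q : X₁ ≤ Q)
    (X₂ : Submodule F (Fin (n + 1) → F)) (hX₂ : X₂ ∈ C) (hwX₂ : w ∈ X₂) :
    ∀ C' : Set (Submodule F (Fin n → F)),
      C' = {Z | (∃ X ∈ C, X ≤ Q ∧ Z = X.map (LinearMap.funLeft F F τ.succAbove)) ∨
        (∃ X ∈ C, w ∈ X ∧ Z = (X ⊓ Q).map (LinearMap.funLeft F F τ.succAbove))} →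
      (∀ Z ∈ C', finrank F Z = k ∨ finrank F Z = k - 1) ∧
      (∀ Z ∈ C', ∀ W ∈ C', Z ≠ W → d ≤ dI Z W) := by
  classical
  intro C' hC'
  subst hC'
  set Γ : (Fin (n + 1) → F) →ₗ[F] (Fin n → F) := LinearMap.funLeft F F τ.succAbove with hΓdef
  -- Step 1: the unit vector e_τ is not in Q
  have heτ : (Pi.single τ (1 : F) : Fin (n + 1) → F) ∉ Q := by
    intro hmem
    apply hτ
    simp only [pivots, Finset.mem_filter, Finset.mem_univ, true_and]
    set f : (Fin (n + 1) → F) →ₗ[F] (Fin (τ.val + 1) → F) :=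
      LinearMap.funLeft F F (Fin.castLE τ.isLt) with hf
    set g : (Fin (τ.val + 1) → F) →ₗ[F] (Fin τ.val → F) :=
      LinearMap.funLeft F F (Fin.castSucc : Fin τ.val → Fin (τ.val + 1)) with hg
    set M : Submodule F (Fin (τ.val + 1) → F) := Q.map f with hM
    have hcomp : (Fin.castLE τ.isLt.le : Fin τ.val → Fin (n + 1)) =
        (Fin.castLE τ.isLt : Fin (τ.val + 1) → Fin (n + 1)) ∘ Fin.castSucc := rfl
    have hQmap : Q.map (LinearMap.funLeft F F (Fin.castLE τ.isLt.le)) = M.map g := by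
      rw [hcomp, LinearMap.funLeft_comp, Submodule.map_comp]
    have hv : f (Pi.single τ (1 : F)) ∈ M := Submodule.mem_map_of_mem hmem
    have hvlast : f (Pi.single τ (1 : F)) (Fin.last τ.val) = 1 := by
      have hτeq : (Fin.castLE τ.isLt (Fin.last τ.val)) = τ := by ext; simp
      show (Pi.single τ (1 : F) : Fin (n + 1) → F) (Fin.castLE τ.isLt (Fin.last τ.val)) = 1
      rw [hτeq, Pi.single_eq_same]
    have hvne : f (Pi.single τ (1 : F)) ≠ 0 := by
      intro h0
      rw [h0] at hvlast
      simp at hvlast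
    have hgv : g (f (Pi.single τ (1 : F))) = 0 := by
      funext i
      have hne : (Fin.castLE τ.isLt (Fin.castSucc i)) ≠ τ := by
        intro h
        have h2 := congrArg Fin.val h
        have h3 := i.isLt
        simp at h2
        omega
      show (Pi.single τ (1 : F) : Fin (n + 1) → F) (Fin.castLE τ.isLt (Fin.castSucc i)) = 0
      rw [Pi.single_eq_of_ne hne]
    -- rank-nullity for g restricted to M
    have hrn := LinearMap.finrank_range_add_finrank_ker (g.domRestrict M)
    rw [LinearMap.range_domRestrict] at hrn
    have hkernontriv : Nontrivial ↥(LinearMap.ker (g.domRestrict M)) := by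
      refine ⟨⟨⟨f (Pi.single τ (1 : F)), hv⟩, ?_⟩, 0, ?_⟩
      · simp [LinearMap.mem_ker, LinearMap.domRestrict_apply, hgv]
      · intro h
        apply hvne
        have := congrArg (fun x => ((x : ↥(LinearMap.ker (g.domRestrict M))) : ↥M).val) h
        simpa using this
    have hkerpos : 0 < finrank F ↥(LinearMap.ker (g.domRestrict M)) :=
      Module.finrank_pos (R := F) (M := ↥(LinearMap.ker (g.domRestrict M)))
    show projDim Q τ.val τ.isLt.le < projDim Q (τ.val + 1) τ.isLt
    unfold projDim
    rw [hQmap]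
    show finrank F ↥(Submodule.map g M) < finrank F ↥M
    omega
  -- Step 2: Γ is injective on Q
  have hkerQ : ∀ v ∈ Q, Γ v = 0 → v = 0 := by
    intro v hv hΓv
    have hvj : ∀ j : Fin (n + 1), j ≠ τ → v j = 0 := by
      intro j hj
      obtain ⟨i, rfl⟩ := Fin.exists_succAbove_eq hj
      have := congrFun hΓv i
      simpa [hΓdef, LinearMap.funLeft_apply] using this
    have hvrep : v = v τ • (Pi.single τ (1 : F) : Fin (n + 1) → F) := by
      funext j
      by_cases h : j = τ
      · subst h; simp
      · simp [Pi.single_apply, h, hvj j h]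
    by_contra hv0
    have hvτ : v τ ≠ 0 := by
      intro h
      apply hv0
      rw [hvrep, h, zero_smul]
    apply heτ
    have hmem := Q.smul_mem (v τ)⁻¹ hv
    have hrepr : (v τ)⁻¹ • v = (Pi.single τ (1 : F) : Fin (n + 1) → F) := by
      funext j
      by_cases h : j = τ
      · subst h
        simp [inv_mul_cancel₀ hvτ]
      · simp [hvj j h, Pi.single_apply, h]
    rwa [hrepr] at hmem
  -- Step 3: Γ preserves dimensions of subspaces of Q
  have hfin : ∀ A : Submodule F (Fin (n + 1) → F), A ≤ Q →
      finrank F ↥(A.map Γ) = finrank F ↥A := by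
    intro A hA
    have hker : LinearMap.ker (Γ.domRestrict A) = ⊥ := by
      rw [Submodule.eq_bot_iff]
      intro x hx
      have hx0 : Γ (x : Fin (n + 1) → F) = 0 := hx
      exact Subtype.ext (hkerQ _ (hA x.2) hx0)
    have hrn := LinearMap.finrank_range_add_finrank_ker (Γ.domRestrict A)
    rw [LinearMap.range_domRestrict, hker, finrank_bot, add_zero] at hrn
    exact hrn
  -- Step 4: Γ preserves intersections of subspaces of Q
  have hinf : ∀ A B : Submodule F (Fin (n + 1) → F), A ≤ Q → B ≤ Q →
      (A.map Γ) ⊓ (B.map Γ) = (A ⊓ B).map Γ := by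
    intro A B hA hB
    apply le_antisymm
    · intro y hy
      obtain ⟨hy1, hy2⟩ := Submodule.mem_inf.mp hy
      obtain ⟨a, ha, rfl⟩ := Submodule.mem_map.mp hy1
      obtain ⟨b, hb, hab⟩ := Submodule.mem_map.mp hy2
      have h0 : b - a = 0 := by
        apply hkerQ _ (Q.sub_mem (hB hb) (hA ha))
        rw [map_sub, hab, sub_self]
      have hba : b = a := by rwa [sub_eq_zero] at h0
      exact Submodule.mem_map_of_mem (Submodule.mem_inf.mpr ⟨ha, hba ▸ hb⟩)
    · exact le_inf (Submodule.map_mono inf_le_left) (Submodule.map_mono inf_le_right)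
  -- dimension of X ⊓ Q for codewords containing w
  have hdim2 : ∀ X ∈ C, w ∈ X → finrank F ↥(X ⊓ Q) = k - 1 ∧ 1 ≤ k := by
    intro X hX hwX
    have hfX : finrank F ↥X = k := hCk X hX
    have hlt : X ⊓ Q < X := by
      refine lt_of_le_of_ne inf_le_left ?_
      intro h
      exact hw (inf_eq_left.mp h hwX)
    have h1 : finrank F ↥(X ⊓ Q) < k := hfX ▸ Submodule.finrank_lt_finrank_of_lt hlt
    have h2 : finrank F ↥(X ⊔ Q) + finrank F ↥(X ⊓ Q) = k + n := by
      rw [Submodule.finrank_sup_add_finrank_inf_eq, hfX, hQ]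
    have h3 : finrank F ↥(X ⊔ Q) ≤ n + 1 := by
      have := Submodule.finrank_le (X ⊔ Q)
      rwa [finrank_fin_fun] at this
    omega
  constructor
  · rintro Z (⟨X, hX, hXQ, rfl⟩ | ⟨X, hX, hwX, rfl⟩)
    · left; rw [hfin X hXQ]; exact hCk X hX
    · right; rw [hfin _ inf_le_right]; exact (hdim2 X hX hwX).1
  · rintro Z (⟨X, hX, hXQ, rfl⟩ | ⟨X, hX, hwX, rfl⟩) W
      (⟨Y, hY, hYQ, rfl⟩ | ⟨Y, hY, hwY, rfl⟩) hZW
    · -- both contained in Q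
      have hne : X ≠ Y := by rintro rfl; exact hZW rfl
      have h := hCd X hX Y hY hne
      unfold dI at h ⊢
      rwa [hfin X hXQ, hfin Y hYQ, hinf X Y hXQ hYQ,
        hfin _ (le_trans inf_le_left hXQ)]
    · -- Z contained, W intersection
      have hne : X ≠ Y := by rintro rfl; exact hw (hXQ hwY)
      have h := hCd X hX Y hY hne
      unfold dI at h ⊢
      rw [hCk X hX, hCk Y hY, max_self] at h
      have hint : X ⊓ (Y ⊓ Q) = X ⊓ Y := by
        rw [inf_comm Y Q, ← inf_assoc, inf_eq_left.mpr hXQ]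
      rw [hfin X hXQ, hfin _ inf_le_right, hinf X (Y ⊓ Q) hXQ inf_le_right, hint,
        hfin _ (le_trans inf_le_left hXQ), hCk X hX, (hdim2 Y hY hwY).1,
        max_eq_left (Nat.sub_le k 1)]
      exact h
    · -- Z intersection, W contained
      have hne : X ≠ Y := by rintro rfl; exact hw (hYQ hwX)
      have h := hCd X hX Y hY hne
      unfold dI at h ⊢
      rw [hCk X hX, hCk Y hY, max_self] at h
      have hint : (X ⊓ Q) ⊓ Y = X ⊓ Y := by
        rw [inf_assoc, inf_comm Q Y, inf_eq_left.mpr hYQ]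
      rw [hfin Y hYQ, hfin _ inf_le_right, hinf (X ⊓ Q) Y inf_le_right hYQ, hint,
        hfin _ (le_trans inf_le_right hYQ), hCk Y hY, (hdim2 X hX hwX).1,
        max_eq_right (Nat.sub_le k 1)]
      exact h
    · -- both intersections
      have hne : X ≠ Y := by rintro rfl; exact hZW rfl
      have h := hCd X hX Y hY hne
      unfold dI at h ⊢
      rw [hCk X hX, hCk Y hY, max_self] at h
      have hint : (X ⊓ Q) ⊓ (Y ⊓ Q) = (X ⊓ Y) ⊓ Q := by
        ext v; simp only [Submodule.mem_inf]; tauto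
      have hltQ : (X ⊓ Y) ⊓ Q < X ⊓ Y := by
        refine lt_of_le_of_ne inf_le_left ?_
        intro hEq
        exact hw (inf_eq_left.mp hEq (Submodule.mem_inf.mpr ⟨hwX, hwY⟩))
      have h1 : finrank F ↥((X ⊓ Y) ⊓ Q) < finrank F ↥(X ⊓ Y) :=
        Submodule.finrank_lt_finrank_of_lt hltQ
      have h2 : finrank F ↥(X ⊓ Y) ≤ k := by
        rw [← hCk X hX]; exact Submodule.finrank_mono inf_le_left
      rw [hfin _ inf_le_right, hfin _ inf_le_right,
        hinf (X ⊓ Q) (Y ⊓ Q) inf_le_right inf_le_right, hint,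
        hfin _ inf_le_right, (hdim2 X hX hwX).1, (hdim2 Y hY hwY).1, max_self]
      omega
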